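/- arXiv:0706.3480 — 3 statements merged into one kernel-verified Lean document; each statement's English description precedes it below -/
import Mathlib

section
/- For every non-increasing probability distribution P = (p_1,...,p_n) on n ≥ 2 symbols satisfying the AUH constraints, the average length satisfies L(P) ≤ (f_{n+3} - 3)/f_{n+1}, where f_k are the Fibonacci numbers, and this bound is attained by the Fibonacci distribution. -/
open Finset

/-- A non-increasing probability distribution on symbols `1,…,n` satisfying the
anti-uniform Huffman (AUH) constraints. -/
def IsAUH (n : ℕ) (p : ℕ → ℝ) : Prop :=
  (∀ i ∈ Finset.Icc 1 n, 0 ≤ p i) ∧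
  (∀ i j, 1 ≤ i → i ≤ j → j ≤ n → p j ≤ p i) ∧
  (∑ i ∈ Finset.Icc 1 n, p i = 1) ∧
  (∀ i, 1 ≤ i → i ≤ n - 2 → ∑ j ∈ Finset.Icc (i + 2) n, p j ≤ p i)

noncomputable def avgLen (n : ℕ) (p : ℕ → ℝ) : ℝ :=
  ∑ i ∈ Finset.Icc 1 (n - 1), (i : ℝ) * p i + ((n : ℝ) - 1) * p n

noncomputable def fibDist (n : ℕ) : ℕ → ℝ := fun i =>
  if i = n then (Nat.fib 2 : ℝ) / (Nat.fib (n + 1) : ℝ)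
  else (Nat.fib (n - i) : ℝ) / (Nat.fib (n + 1) : ℝ)

/-!
With tail sums `T k = p k + ⋯ + p n`, read the distribution backwards as
`v = tailSeq n p = (p n, p (n-1), T (n-1), T (n-2), …, T 1)`. The AUH constraints make `v`
super-Fibonacci (`v k + v (k+1) ≤ v (k+2)`) with `v 0 ≤ v 1` and `v 2 = v 0 + v 1`, while
`L(P) = v 2 + ⋯ + v n` and `v n = 1`. Such a `v` is `v 0 • (f (k+1))ₖ + (v 1 - v 0) • (f k)ₖ` plus
a super-Fibonacci sequence vanishing up to index 2. On the first summand, the Fibonacci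
distribution, the ratio of `v 2 + ⋯ + v n` to `v n` is `(f (n+3) - 3) / f (n+1)`; on the other two
it is at most that. For a super-Fibonacci sequence starting at `0` the ratio of its sum to its last
term is at most the Fibonacci one, by peeling off `w 1 • (f k)ₖ` and inducting on the length.
Every comparison of Fibonacci ratios needed reduces to `f (m+1)² + f m ≤ f m * f (m+2) + f (m+1)`.
-/

open Nat (fib fib_add_two)

/-- By Cassini, the slack is `f (m-1) - (-1)^m`; it grows by `f m` from `m` to `m + 2`. -/
theorem fib_succ_sq_add_fib_le (m : ℕ) :
    fib (m + 1) ^ 2 + fib m ≤ fib m * fib (m + 2) + fib (m + 1) := by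
  induction m using Nat.twoStepInduction with
  | zero => simp
  | one => simp [fib_add_two]
  | more m ih _ =>
    simp only [fib_add_two, add_assoc, Nat.reduceAdd] at ih ⊢
    linarith [ih]

theorem sum_range_fib_add (N c : ℕ) :
    ∑ k ∈ range N, (fib (k + c) : ℝ) = fib (N + c + 1) - fib (c + 1) := by
  induction N with
  | zero => simp
  | succ N ih =>
    rw [sum_range_succ, ih, show N + 1 + c + 1 = N + c + 2 by ring, fib_add_two]
    push_cast
    ring

theorem monotone_fib_add_two_sub_one_div :
    Monotone fun N => ((fib (N + 2) : ℝ) - 1) / fib N := by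
  refine monotone_nat_of_le_succ fun N => ?_
  rcases N.eq_zero_or_pos with rfl | hN
  · norm_num [fib_add_two]
  rw [div_le_div_iff₀ (by simpa) (by simp)]
  have K : (fib (N + 1) : ℝ) ^ 2 + fib N ≤ fib N * fib (N + 2) + fib (N + 1) := by
    exact_mod_cast fib_succ_sq_add_fib_le N
  rw [fib_add_two (n := N + 1), fib_add_two (n := N)] at *
  push_cast at *
  linarith [K]

theorem fib_add_four_sub_two_le (m : ℕ) :
    (fib (m + 4) : ℝ) - 2 ≤ ((fib (m + 5) : ℝ) - 3) / fib (m + 3) * fib (m + 2) := by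
  rw [div_mul_eq_mul_div, le_div_iff₀ (by simp)]
  have K : (fib (m + 1) : ℝ) ^ 2 + fib m ≤ fib m * fib (m + 2) + fib (m + 1) := by
    exact_mod_cast fib_succ_sq_add_fib_le m
  simp only [fib_add_two (n := m + 3), fib_add_two (n := m + 2), fib_add_two (n := m + 1),
    fib_add_two (n := m)] at *
  push_cast at *
  linarith [K]

theorem fib_add_two_sub_one_div_le_fib_add_five (m : ℕ) :
    ((fib (m + 2) : ℝ) - 1) / fib m ≤ ((fib (m + 5) : ℝ) - 3) / fib (m + 3) := by
  rcases m.eq_zero_or_pos with rfl | hm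
  · norm_num [fib_add_two]
  rw [div_le_div_iff₀ (by simpa) (by simp)]
  have K : (fib (m + 1) : ℝ) ^ 2 + fib m ≤ fib m * fib (m + 2) + fib (m + 1) := by
    exact_mod_cast fib_succ_sq_add_fib_le m
  simp only [fib_add_two (n := m + 3), fib_add_two (n := m + 2), fib_add_two (n := m + 1),
    fib_add_two (n := m)] at *
  push_cast at *
  linarith [K]

def SuperFibOn (N : ℕ) (w : ℕ → ℝ) : Prop :=
  ∀ k, k + 2 ≤ N → w k + w (k + 1) ≤ w (k + 2)

namespace SuperFibOn

variable {N : ℕ} {w : ℕ → ℝ}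

theorem nonneg (hw : SuperFibOn N w) (h0 : 0 ≤ w 0) (h1 : 0 ≤ w 1) : ∀ k ≤ N, 0 ≤ w k := by
  intro k
  induction k using Nat.twoStepInduction with
  | zero => exact fun _ => h0
  | one => exact fun _ => h1
  | more k ih ih' =>
    intro hk
    linarith [hw k hk, ih (by omega), ih' (by omega)]

theorem sum_range_le (hw : SuperFibOn N w) (hN : 1 ≤ N) (h0 : w 0 = 0) (h1 : 0 ≤ w 1) :
    ∑ k ∈ range (N + 1), w k ≤ ((fib (N + 2) : ℝ) - 1) / fib N * w N := by
  induction N, hN using Nat.le_induction generalizing w with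
  | base => norm_num [sum_range_succ, h0, fib_add_two]
  | succ N hN ih =>
    set w' : ℕ → ℝ := fun k => w (k + 1) - w 1 * fib (k + 1) with hw'
    have hw'_fib : SuperFibOn N w' := by
      intro k hk
      have := hw (k + 1) (by omega)
      simp only [hw', fib_add_two (n := k + 1)]
      push_cast
      linarith
    have hw'0 : w' 0 = 0 := by simp [hw']
    have hw'1 : 0 ≤ w' 1 := by
      have := hw 0 (by omega)
      simp [hw', h0] at this ⊢
      linarith
    have hsum : ∑ k ∈ range (N + 2), w k =
        ∑ k ∈ range (N + 1), w' k + w 1 * (fib (N + 3) - 1) := by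
      rw [sum_range_succ', h0, add_zero]
      simp only [hw', sum_sub_distrib, ← mul_sum, sum_range_fib_add (N + 1) 1]
      norm_num [fib_add_two]
    have hlast : w (N + 1) = w' N + w 1 * fib (N + 1) := by simp [hw']
    have hw'N : 0 ≤ w' N := hw'_fib.nonneg hw'0.ge hw'1 N le_rfl
    calc ∑ k ∈ range (N + 2), w k
        ≤ ((fib (N + 2) : ℝ) - 1) / fib N * w' N + w 1 * (fib (N + 3) - 1) := by
          rw [hsum]; gcongr; exact ih hw'_fib hw'0 hw'1
      _ ≤ ((fib (N + 3) : ℝ) - 1) / fib (N + 1) * w' N + w 1 * (fib (N + 3) - 1) := by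
          gcongr ?_ * _ + _; exact monotone_fib_add_two_sub_one_div N.le_succ
      _ = ((fib (N + 1 + 2) : ℝ) - 1) / fib (N + 1) * w (N + 1) := by
          rw [hlast]; field_simp

theorem sum_Icc_two_le {n : ℕ} {v : ℕ → ℝ} (hv : SuperFibOn n v) (hn : 2 ≤ n)
    (h01 : v 0 ≤ v 1) (h2 : v 2 = v 0 + v 1) :
    ∑ k ∈ Icc 2 n, v k ≤ ((fib (n + 3) : ℝ) - 3) / fib (n + 1) * v n := by
  obtain ⟨m, rfl⟩ : ∃ m, n = m + 2 := ⟨n - 2, by omega⟩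
  set c : ℝ := ((fib (m + 5) : ℝ) - 3) / fib (m + 3)
  set R : ℕ → ℝ := fun k => v (k + 2) - v 0 * fib (k + 3) - (v 1 - v 0) * fib (k + 2) with hR
  have hR0 : R 0 = 0 := by norm_num [hR, h2, fib_add_two]; ring
  have hR_fib : SuperFibOn m R := by
    intro k hk
    have := hv (k + 2) (by omega)
    simp only [hR, fib_add_two (n := k + 3), fib_add_two (n := k + 2)]
    push_cast
    linarith
  have hR_sum : ∑ k ∈ range (m + 1), R k ≤ c * R m := by
    rcases m.eq_zero_or_pos with rfl | hm
    · simp [hR0]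
    have hR1 : 0 ≤ R 1 := by
      have := hv 1 (by omega)
      norm_num [hR, h2, fib_add_two] at this ⊢
      linarith
    calc ∑ k ∈ range (m + 1), R k ≤ ((fib (m + 2) : ℝ) - 1) / fib m * R m :=
          hR_fib.sum_range_le hm hR0 hR1
      _ ≤ c * R m := by
          gcongr
          · exact hR_fib.nonneg hR0.ge hR1 m le_rfl
          · exact fib_add_two_sub_one_div_le_fib_add_five m
  have hsum : ∑ k ∈ Icc 2 (m + 2), v k = ∑ k ∈ range (m + 1), R k
      + v 0 * (fib (m + 5) - 3) + (v 1 - v 0) * (fib (m + 4) - 2) := by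
    rw [← Ico_add_one_right_eq_Icc, sum_Ico_eq_sum_range, show m + 2 + 1 - 2 = m + 1 by omega]
    simp only [hR, sum_sub_distrib, ← mul_sum, sum_range_fib_add (m + 1) 3,
      sum_range_fib_add (m + 1) 2, add_comm 2]
    norm_num [fib_add_two, show m + 1 + 3 + 1 = m + 5 by ring, show m + 1 + 2 + 1 = m + 4 by ring]
    ring
  have hlast : v (m + 2) = R m + v 0 * fib (m + 3) + (v 1 - v 0) * fib (m + 2) := by
    simp only [hR]; ring
  have hc : c * fib (m + 3) = fib (m + 5) - 3 := div_mul_cancel₀ _ (by simp)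
  rw [hsum, hlast, show m + 2 + 3 = m + 5 by ring, show m + 2 + 1 = m + 3 by ring, ← hc]
  calc ∑ k ∈ range (m + 1), R k + v 0 * (c * fib (m + 3)) + (v 1 - v 0) * (fib (m + 4) - 2)
      ≤ c * R m + v 0 * (c * fib (m + 3)) + (v 1 - v 0) * (c * fib (m + 2)) := by
        gcongr
        exact fib_add_four_sub_two_le m
    _ = c * (R m + v 0 * fib (m + 3) + (v 1 - v 0) * fib (m + 2)) := by ring

end SuperFibOn

noncomputable def tailSum (n : ℕ) (p : ℕ → ℝ) (k : ℕ) : ℝ := ∑ j ∈ Icc k n, p j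

theorem tailSum_eq_add {n k : ℕ} (p : ℕ → ℝ) (hk : k ≤ n) :
    tailSum n p k = p k + tailSum n p (k + 1) := by
  rw [tailSum, tailSum, ← add_sum_Ioc_eq_sum_Icc hk, Icc_add_one_left_eq_Ioc]

theorem avgLen_eq_sum_tailSum {n : ℕ} (hn : 1 ≤ n) (p : ℕ → ℝ) :
    avgLen n p = ∑ k ∈ Icc 1 (n - 1), tailSum n p k := by
  have hswap : ∑ k ∈ Icc 1 (n - 1), tailSum n p k
      = ∑ j ∈ Icc 1 n, ∑ _k ∈ Icc 1 (min j (n - 1)), p j :=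
    sum_comm' fun k j => by simp only [mem_Icc]; omega
  obtain ⟨m, rfl⟩ : ∃ m, n = m + 1 := ⟨n - 1, by omega⟩
  rw [hswap, sum_Icc_succ_top (by omega), avgLen]
  simp only [sum_const, Nat.card_Icc, nsmul_eq_mul, add_tsub_cancel_right]
  congr 1
  · exact sum_congr rfl fun j hj => by rw [min_eq_left (mem_Icc.1 hj).2]
  · rw [min_eq_right m.le_succ]; push_cast; ring

theorem sum_Icc_one_eq_sum_Icc_two_reflect (n : ℕ) (f : ℕ → ℝ) :
    ∑ k ∈ Icc 1 (n - 1), f k = ∑ k ∈ Icc 2 n, f (n + 1 - k) :=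
  sum_nbij' (fun k => n + 1 - k) (fun k => n + 1 - k) (by simp; omega) (by simp; omega)
    (by simp; omega) (by simp; omega) (fun k hk => by simp at hk; congr; omega)

noncomputable def tailSeq (n : ℕ) (p : ℕ → ℝ) : ℕ → ℝ
  | 0 => p n
  | 1 => p (n - 1)
  | k + 2 => tailSum n p (n - 1 - k)

theorem tailSeq_of_two_le {n k : ℕ} (p : ℕ → ℝ) (hk : 2 ≤ k) :
    tailSeq n p k = tailSum n p (n + 1 - k) := by
  obtain ⟨k, rfl⟩ : ∃ j, k = j + 2 := ⟨k - 2, by omega⟩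
  simp only [tailSeq]
  congr 1
  omega

theorem tailSeq_two {n : ℕ} (p : ℕ → ℝ) (hn : 1 ≤ n) :
    tailSeq n p 2 = tailSeq n p 0 + tailSeq n p 1 := by
  have hTn : tailSum n p n = p n := by simp [tailSum]
  rw [tailSeq_of_two_le p le_rfl, show n + 1 - 2 = n - 1 by omega, tailSum_eq_add p (by omega),
    show n - 1 + 1 = n by omega, hTn, tailSeq, tailSeq, add_comm]

theorem IsAUH.superFibOn_tailSeq {n : ℕ} {p : ℕ → ℝ} (hp : IsAUH n p) :
    SuperFibOn n (tailSeq n p) := by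
  obtain ⟨-, hmono, -, hauh⟩ := hp
  have hT_fib : ∀ i, 1 ≤ i → i + 2 ≤ n →
      tailSum n p (i + 1) + tailSum n p (i + 2) ≤ tailSum n p i := fun i hi hin => by
    have h := hauh i hi (by omega)
    rw [← tailSum] at h
    linarith [tailSum_eq_add p (show i ≤ n by omega)]
  intro k hk
  match k, hk with
  | 0, _ => exact (tailSeq_two p (by omega)).ge
  | 1, hk =>
    simp only [tailSeq, Nat.sub_zero]
    rw [tailSum_eq_add p (show n - 1 - 1 ≤ n by omega), show n - 1 - 1 + 1 = n - 1 by omega]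
    linarith [hmono (n - 1 - 1) (n - 1) (by omega) (by omega) (by omega)]
  | k + 2, hk =>
    have h := hT_fib (n - 3 - k) (by omega) (by omega)
    rw [show n - 3 - k + 1 = n - 1 - (k + 1) by omega, show n - 3 - k + 2 = n - 1 - k by omega,
      show n - 3 - k = n - 1 - (k + 2) by omega] at h
    simp only [tailSeq]
    linarith

theorem avgLen_eq_sum_tailSeq {n : ℕ} (hn : 1 ≤ n) (p : ℕ → ℝ) :
    avgLen n p = ∑ k ∈ Icc 2 n, tailSeq n p k := by
  rw [avgLen_eq_sum_tailSum hn, sum_Icc_one_eq_sum_Icc_two_reflect]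
  exact sum_congr rfl fun k hk => (tailSeq_of_two_le p (mem_Icc.1 hk).1).symm

theorem avgLen_le_of_isAUH {n : ℕ} (hn : 2 ≤ n) {p : ℕ → ℝ} (hp : IsAUH n p) :
    avgLen n p ≤ ((fib (n + 3) : ℝ) - 3) / fib (n + 1) := by
  have ⟨_, hmono, hsum, _⟩ := hp
  have hlast : tailSeq n p n = 1 := by
    rw [tailSeq_of_two_le p hn, show n + 1 - n = 1 by omega]; exact hsum
  have h01 : tailSeq n p 0 ≤ tailSeq n p 1 := hmono _ _ (by omega) (by omega) le_rfl
  calc avgLen n p = ∑ k ∈ Icc 2 n, tailSeq n p k := avgLen_eq_sum_tailSeq (by omega) p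
    _ ≤ _ := hp.superFibOn_tailSeq.sum_Icc_two_le hn h01 (tailSeq_two p (by omega))
    _ = ((fib (n + 3) : ℝ) - 3) / fib (n + 1) := by rw [hlast, mul_one]

theorem tailSum_fibDist {n k : ℕ} (hk : k ≤ n) :
    tailSum n (fibDist n) k = fib (n + 2 - k) / fib (n + 1) := by
  induction hj : n - k generalizing k with
  | zero =>
    obtain rfl : k = n := by omega
    simp [tailSum, fibDist]
  | succ j ih =>
    rw [tailSum_eq_add _ hk, ih (by omega) (by omega), fibDist, if_neg (by omega), ← add_div,
      show n - k = j + 1 by omega, show n + 2 - (k + 1) = j + 2 by omega,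
      show n + 2 - k = j + 3 by omega, fib_add_two (n := j + 1)]
    push_cast
    ring

theorem isAUH_fibDist {n : ℕ} (hn : 1 ≤ n) : IsAUH n (fibDist n) := by
  refine ⟨fun i _ => by unfold fibDist; split <;> positivity, fun i j hi hij hjn => ?_, ?_,
    fun i hi hin => ?_⟩
  · rcases hij.eq_or_lt with rfl | hij
    · rfl
    unfold fibDist
    rw [if_neg (by omega : i ≠ n)]
    split_ifs
    · have : fib 2 ≤ fib (n - i) := by rw [Nat.fib_two]; exact Nat.fib_pos.2 (by omega)
      exact div_le_div_of_nonneg_right (by exact_mod_cast this) (by positivity)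
    · gcongr
  · rw [← tailSum, tailSum_fibDist hn, show n + 2 - 1 = n + 1 by omega, div_self (by simp)]
  · rw [← tailSum, tailSum_fibDist (by omega), fibDist, if_neg (by omega),
      show n + 2 - (i + 2) = n - i by omega]

theorem avgLen_fibDist {n : ℕ} (hn : 1 ≤ n) :
    avgLen n (fibDist n) = ((fib (n + 3) : ℝ) - 3) / fib (n + 1) := by
  have hv : ∀ k ∈ range (n - 1), tailSeq n (fibDist n) (2 + k) = fib (k + 3) / fib (n + 1) :=
    fun k hk => by
      rw [mem_range] at hk
      rw [tailSeq_of_two_le _ (by omega), tailSum_fibDist (by omega),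
        show n + 2 - (n + 1 - (2 + k)) = k + 3 by omega]
  rw [avgLen_eq_sum_tailSeq hn, ← Ico_add_one_right_eq_Icc, sum_Ico_eq_sum_range,
    show n + 1 - 2 = n - 1 by omega, sum_congr rfl hv, ← sum_div, sum_range_fib_add,
    show n - 1 + 3 + 1 = n + 3 by omega]
  norm_num [fib_add_two]

/-- The average length of every AUH distribution on `n ≥ 2` symbols is at most
`(f (n+3) - 3) / f (n+1)`, and the Fibonacci distribution attains this bound. -/
theorem avgLen_le_max (n : ℕ) (hn : 2 ≤ n) :
    (∀ p : ℕ → ℝ, IsAUH n p →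
      avgLen n p ≤ ((Nat.fib (n + 3) : ℝ) - 3) / (Nat.fib (n + 1) : ℝ)) ∧
    IsAUH n (fibDist n) ∧
    avgLen n (fibDist n) = ((Nat.fib (n + 3) : ℝ) - 3) / (Nat.fib (n + 1) : ℝ) :=
  ⟨fun _ hp => avgLen_le_of_isAUH hn hp, isAUH_fibDist (by omega), avgLen_fibDist (by omega)⟩
end

section
/- If a non-increasing probability distribution P = (p_1,...,p_n) satisfying the AUH constraints maximizes the entropy H(P), then p_i ≤ q_i := sum_{j>i} p_j for all i = 1,...,n-2. -/
/-!
Suppose `p i > q i := ∑_{j > i} p j` for some `1 ≤ i ≤ n - 2`, and move `ε = (p i - q i) / 2` of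
mass from symbol `i` to symbol `i + 1`. Since `p (i + 1) ≤ q i`, the two modified masses stay
ordered, `p (i + 1) + ε ≤ p i - ε`, so the distribution stays non-increasing; the AUH constraints
that change are at `i - 1` (its tail gains `ε`, but `q i + ε < p i ≤ p (i - 1)`), at `i` (its tail
is at most `q i ≤ p i - ε`) and at `i + 1` (which only gains). Strict concavity of `-x log x`
makes the entropy increase strictly under such a transfer from a larger to a smaller mass,
contradicting maximality.
-/

open Finset

/-- Entropy (base 2) of a distribution on symbols `1,…,n`. -/
noncomputable def entropy (n : ℕ) (p : ℕ → ℝ) : ℝ :=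
  -∑ i ∈ Finset.Icc 1 n, p i * Real.logb 2 (p i)

open Real

theorem StrictConcaveOn.add_lt_add_of_shift {s : Set ℝ} {f : ℝ → ℝ}
    (hf : StrictConcaveOn ℝ s f) {a b ε : ℝ} (ha : a ∈ s) (hb : b ∈ s) (hε : 0 < ε)
    (hεab : ε < a - b) : f a + f b < f (a - ε) + f (b + ε) := by
  have hab : 0 < a - b := hε.trans hεab
  set t := ε / (a - b)
  have ht0 : 0 < t := div_pos hε hab
  have ht1 : 0 < 1 - t := sub_pos.2 ((div_lt_one hab).2 hεab)
  have hta : t * (a - b) = ε := div_mul_cancel₀ ε hab.ne'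
  have h₁ := hf.2 ha hb (by linarith) ht1 ht0 (by ring)
  have h₂ := hf.2 ha hb (by linarith) ht0 ht1 (by ring)
  simp only [smul_eq_mul] at h₁ h₂
  rw [show (1 - t) * a + t * b = a - ε by linear_combination -hta] at h₁
  rw [show t * a + (1 - t) * b = b + ε by linear_combination hta] at h₂
  linarith

theorem entropy_eq_sum_negMulLog (n : ℕ) (p : ℕ → ℝ) :
    entropy n p = (∑ i ∈ Icc 1 n, negMulLog (p i)) / log 2 := by
  rw [entropy, sum_div, ← sum_neg_distrib]
  refine sum_congr rfl fun i _ ↦ ?_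
  rw [negMulLog, logb]
  ring

def shiftMass (p : ℕ → ℝ) (i : ℕ) (ε : ℝ) : ℕ → ℝ :=
  p - Pi.single i ε + Pi.single (i + 1) ε

section ShiftMass

variable {n i : ℕ} {p : ℕ → ℝ} {ε : ℝ}

@[simp]
theorem shiftMass_apply_self : shiftMass p i ε i = p i - ε := by
  simp [shiftMass]

@[simp]
theorem shiftMass_apply_succ : shiftMass p i ε (i + 1) = p (i + 1) + ε := by
  simp [shiftMass]

theorem shiftMass_apply_of_ne {j : ℕ} (hi : j ≠ i) (hi' : j ≠ i + 1) :
    shiftMass p i ε j = p j := by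
  simp [shiftMass, hi, hi']

theorem sum_shiftMass (s : Finset ℕ) :
    ∑ j ∈ s, shiftMass p i ε j =
      ∑ j ∈ s, p j - (if i ∈ s then ε else 0) + (if i + 1 ∈ s then ε else 0) := by
  simp only [shiftMass, Pi.add_apply, Pi.sub_apply, sum_add_distrib,
    sum_sub_distrib, sum_pi_single']

theorem entropy_lt_entropy_shiftMass (hi : 1 ≤ i) (hin : i < n) (hb : 0 ≤ p (i + 1))
    (hε : 0 < ε) (hεab : ε < p i - p (i + 1)) :
    entropy n p < entropy n (shiftMass p i ε) := by
  simp only [entropy_eq_sum_negMulLog]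
  refine div_lt_div_of_pos_right ?_ (log_pos one_lt_two)
  rw [← sub_pos, ← sum_sub_distrib,
    sum_eq_add_of_mem i (i + 1) (by simp; omega) (by simp; omega) (by omega)
      fun j _ hj ↦ by rw [shiftMass_apply_of_ne hj.1 hj.2, sub_self]]
  have := strictConcaveOn_negMulLog.add_lt_add_of_shift
    (Set.mem_Ici.2 (by linarith)) (Set.mem_Ici.2 hb) hε hεab
  simp only [shiftMass_apply_self, shiftMass_apply_succ]
  linarith

theorem IsAUH.sum_le_sum_of_subset (hp : IsAUH n p) {s t : Finset ℕ}
    (hst : s ⊆ t) (ht : t ⊆ Icc 1 n) : ∑ j ∈ s, p j ≤ ∑ j ∈ t, p j :=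
  sum_le_sum_of_subset_of_nonneg hst fun j hj _ ↦ hp.1 j (ht hj)

theorem IsAUH.le_sum_of_mem {j : ℕ} (hp : IsAUH n p) {t : Finset ℕ}
    (ht : t ⊆ Icc 1 n) (hj : j ∈ t) : p j ≤ ∑ k ∈ t, p k := by
  simpa using hp.sum_le_sum_of_subset (singleton_subset_iff.2 hj) ht

theorem IsAUH.shiftMass_nonneg (hp : IsAUH n p) (hε : 0 ≤ ε)
    (hgap : 2 * ε ≤ p i - ∑ j ∈ Icc (i + 1) n, p j) {j : ℕ} (hj : j ∈ Icc 1 n) :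
    0 ≤ shiftMass p i ε j := by
  have hq : 0 ≤ ∑ j ∈ Icc (i + 1) n, p j :=
    sum_nonneg fun j hj ↦ hp.1 j (Icc_subset_Icc_left (by omega) hj)
  obtain rfl | hji := eq_or_ne j i
  · rw [shiftMass_apply_self]; linarith
  obtain rfl | hji' := eq_or_ne j (i + 1)
  · rw [shiftMass_apply_succ]; linarith [hp.1 (i + 1) hj]
  rw [shiftMass_apply_of_ne hji hji']
  exact hp.1 j hj

theorem IsAUH.shiftMass_antitone (hp : IsAUH n p) (hin : i < n) (hε : 0 ≤ ε)
    (hgap : 2 * ε ≤ p i - ∑ j ∈ Icc (i + 1) n, p j) {k l : ℕ} (hk : 1 ≤ k) (hkl : k ≤ l)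
    (hln : l ≤ n) : shiftMass p i ε l ≤ shiftMass p i ε k := by
  have hq := hp.le_sum_of_mem (Icc_subset_Icc_left (by omega : 1 ≤ i + 1))
    (mem_Icc.2 ⟨le_rfl, hin⟩)
  have hlow : ∀ j, i + 1 ≤ j → j ≤ n → shiftMass p i ε j ≤ p (i + 1) + ε := by
    intro j hij hjn
    obtain rfl | hj := eq_or_ne j (i + 1)
    · rw [shiftMass_apply_succ]
    rw [shiftMass_apply_of_ne (by omega) hj]
    linarith [hp.2.1 (i + 1) j (by omega) hij hjn]
  have hhigh : ∀ j, 1 ≤ j → j ≤ i → p i - ε ≤ shiftMass p i ε j := by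
    intro j hj hji
    obtain rfl | hj' := eq_or_ne j i
    · rw [shiftMass_apply_self]
    rw [shiftMass_apply_of_ne hj' (by omega)]
    linarith [hp.2.1 j i hj hji hin.le]
  by_cases hli : l ≤ i
  · obtain rfl | hl := eq_or_ne l i
    · rw [shiftMass_apply_self]
      exact hhigh k hk hkl
    rw [shiftMass_apply_of_ne hl (by omega), shiftMass_apply_of_ne (by omega) (by omega)]
    exact hp.2.1 k l hk hkl hln
  by_cases hki : k ≤ i
  · linarith [hlow l (by omega) hln, hhigh k hk hki]
  obtain rfl | hk' := eq_or_ne k (i + 1)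
  · rw [shiftMass_apply_succ]
    exact hlow l (by omega) hln
  rw [shiftMass_apply_of_ne (by omega) (by omega), shiftMass_apply_of_ne (by omega) hk']
  exact hp.2.1 k l hk hkl hln

theorem IsAUH.shiftMass_sum_tail_le (hp : IsAUH n p) (hin : i < n) (hε : 0 ≤ ε)
    (hgap : 2 * ε ≤ p i - ∑ j ∈ Icc (i + 1) n, p j) {k : ℕ} (hk : 1 ≤ k) (hkn : k ≤ n - 2) :
    ∑ j ∈ Icc (k + 2) n, shiftMass p i ε j ≤ shiftMass p i ε k := by
  have hq := hp.sum_le_sum_of_subset (Icc_subset_Icc_left (by omega : i + 1 ≤ i + 2))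
    (Icc_subset_Icc_left (by omega))
  have hi_mem : i ∈ Icc (k + 2) n ↔ k + 2 ≤ i := by simp; omega
  have hi_mem' : i + 1 ∈ Icc (k + 2) n ↔ k + 1 ≤ i := by simp; omega
  have htail := hp.2.2.2 k hk hkn
  rw [sum_shiftMass]
  simp only [hi_mem, hi_mem']
  obtain h | rfl | rfl | rfl | h : k + 2 ≤ i ∨ k + 1 = i ∨ k = i ∨ k = i + 1 ∨ i + 1 < k := by
    omega
  · rw [if_pos h, if_pos (by omega), shiftMass_apply_of_ne (by omega) (by omega)]
    linarith
  · rw [if_neg (by omega), if_pos le_rfl, shiftMass_apply_of_ne (by omega) (by omega)]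
    linarith [hp.2.1 k (k + 1) hk (by omega) hin.le]
  · rw [if_neg (by omega), if_neg (by omega), shiftMass_apply_self]
    linarith
  · rw [if_neg (by omega), if_neg (by omega), shiftMass_apply_succ]
    linarith
  · rw [if_neg (by omega), if_neg (by omega), shiftMass_apply_of_ne (by omega) (by omega)]
    linarith

theorem IsAUH.shiftMass (hp : IsAUH n p) (hi : 1 ≤ i) (hin : i < n) (hε : 0 ≤ ε)
    (hgap : 2 * ε ≤ p i - ∑ j ∈ Icc (i + 1) n, p j) : IsAUH n (shiftMass p i ε) := by
  refine ⟨fun j hj ↦ hp.shiftMass_nonneg hε hgap hj,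
    fun k l hk hkl hln ↦ hp.shiftMass_antitone hin hε hgap hk hkl hln, ?_,
    fun k hk hkn ↦ hp.shiftMass_sum_tail_le hin hε hgap hk hkn⟩
  rw [sum_shiftMass, if_pos (by simp; omega), if_pos (by simp; omega), hp.2.2.1]
  ring

end ShiftMass

theorem maxEntropy_le_node_general (n : ℕ) (p : ℕ → ℝ) (hp : IsAUH n p)
    (hmax : ∀ p' : ℕ → ℝ, IsAUH n p' → entropy n p' ≤ entropy n p) :
    ∀ i, 1 ≤ i → i ≤ n - 2 → p i ≤ ∑ j ∈ Finset.Icc (i + 1) n, p j := by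
  intro i hi hin
  by_contra! hgt
  obtain ⟨ε, hgap⟩ : ∃ ε : ℝ, 2 * ε = p i - ∑ j ∈ Icc (i + 1) n, p j :=
    ⟨_, mul_div_cancel₀ _ two_ne_zero⟩
  have hε : 0 < ε := by linarith
  have hq : p (i + 1) ≤ ∑ j ∈ Icc (i + 1) n, p j :=
    hp.le_sum_of_mem (Icc_subset_Icc_left (by omega)) (by simp; omega)
  have hp' := hp.shiftMass hi (by omega) hε.le hgap.le
  exact (hmax _ hp').not_gt <| entropy_lt_entropy_shiftMass hi (by omega)
    (hp.1 (i + 1) (by simp; omega)) hε (by linarith)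

/-- If an AUH distribution maximizes the entropy, then `p i ≤ q i = ∑_{j > i} p j`
for all `i = 1,…,n-2`. -/
theorem maxEntropy_le_node (n : ℕ) (hn : 2 ≤ n) (p : ℕ → ℝ) (hp : IsAUH n p)
    (hmax : ∀ p' : ℕ → ℝ, IsAUH n p' → entropy n p' ≤ entropy n p) :
    ∀ i, 1 ≤ i → i ≤ n - 2 → p i ≤ ∑ j ∈ Finset.Icc (i + 1) n, p j :=
  maxEntropy_le_node_general n p hp hmax
end

section
/- If a non-increasing probability distribution P = (p_1,...,p_n), n ≥ 3, satisfying the AUH constraints maximizes the entropy, then p_1 = q_2 = sum_{i≥3} p_i. -/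
open Finset

/-!
If the AUH constraint at `1` were slack, `∑_{i ≥ 3} p i < p 1`, some small transfer of mass
from a symbol to the next, less likely one would keep the distribution AUH and, by strict
concavity of `-x log x`, strictly increase the entropy. If `p 2 < p 1`, move mass from `1`
to `2`: only the constraint at `1` tightens. If `p 2 = p 1`, then `p 3 ≤ ∑_{i ≥ 3} p i < p 2`,
and moving mass from `2` to `3` tightens only the constraints at `1` and `2`, both slack.
-/

open Filter Topology

lemma StrictConcaveOn.add_lt_add_of_transfer {f : ℝ → ℝ} {s : Set ℝ}
    (hf : StrictConcaveOn ℝ s f) {x y ε : ℝ} (hx : x ∈ s) (hy : y ∈ s) (hε : 0 < ε)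
    (hεxy : ε < x - y) : f x + f y < f (x - ε) + f (y + ε) := by
  have hxy : 0 < x - y := hε.trans hεxy
  set t := ε / (x - y)
  have ht : 0 < t := div_pos hε hxy
  have ht' : 0 < 1 - t := by rw [sub_pos, div_lt_one hxy]; exact hεxy
  have hx' : (1 - t) • x + t • y = x - ε := by
    simp only [smul_eq_mul, t]; field_simp; ring
  have hy' : t • x + (1 - t) • y = y + ε := by
    simp only [smul_eq_mul, t]; field_simp; ring
  have h₁ := hf.2 hx hy (by linarith) ht' ht (by ring)
  have h₂ := hf.2 hx hy (by linarith) ht ht' (by ring)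
  rw [hx'] at h₁
  rw [hy'] at h₂
  simp only [smul_eq_mul] at h₁ h₂
  linarith

lemma Finset.sum_sub_sum_eq_of_eq_off_pair {ι M : Type*} [DecidableEq ι] [AddCommGroup M]
    {f g : ι → M} {s : Finset ι} {a b : ι} (hab : a ≠ b) (ha : a ∈ s) (hb : b ∈ s)
    (hfg : ∀ i, i ≠ a → i ≠ b → f i = g i) :
    ∑ i ∈ s, f i - ∑ i ∈ s, g i = f a + f b - (g a + g b) := by
  have hsub : {a, b} ⊆ s := insert_subset ha (singleton_subset_iff.2 hb)
  rw [← sum_sdiff hsub, ← sum_sdiff (f := g) hsub, sum_pair hab, sum_pair hab,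
    sum_congr rfl fun i hi => hfg i (by grind) (by grind)]
  abel

section Transfer

variable {ι : Type*} [DecidableEq ι] (p : ι → ℝ) (a b : ι) (ε : ℝ)

def transfer : ι → ℝ := p - Pi.single a ε + Pi.single b ε

variable {a b}

lemma transfer_apply_left (hab : a ≠ b) : transfer p a b ε a = p a - ε := by
  simp [transfer, hab]

lemma transfer_apply_right (hab : a ≠ b) : transfer p a b ε b = p b + ε := by
  simp [transfer, hab.symm]

lemma transfer_apply_of_ne {i : ι} (ha : i ≠ a) (hb : i ≠ b) : transfer p a b ε i = p i := by
  simp [transfer, ha, hb]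

lemma sum_transfer (s : Finset ι) :
    ∑ i ∈ s, transfer p a b ε i =
      ∑ i ∈ s, p i - (if a ∈ s then ε else 0) + (if b ∈ s then ε else 0) := by
  simp only [transfer, Pi.add_apply, Pi.sub_apply, sum_add_distrib, sum_sub_distrib,
    sum_pi_single']

variable {p ε}

lemma le_transfer_apply (hε : 0 ≤ ε) {i : ι} (hi : i ≠ a) : p i ≤ transfer p a b ε i := by
  obtain rfl | hib := eq_or_ne i b
  · simp [transfer, hi, hε]
  · simp [transfer, hi, hib]

lemma transfer_apply_le (hε : 0 ≤ ε) {i : ι} (hi : i ≠ b) : transfer p a b ε i ≤ p i := by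
  obtain rfl | hia := eq_or_ne i a
  · simp [transfer, hi, hε]
  · simp [transfer, hi, hia]

end Transfer

section AdjacentTransfer

variable {n k m : ℕ} {p : ℕ → ℝ} {ε : ℝ}

lemma sum_Icc_transfer_succ_of_ne (hm : m ≠ k + 1) (hkn : k + 1 ≤ n) :
    ∑ i ∈ Icc m n, transfer p k (k + 1) ε i = ∑ i ∈ Icc m n, p i := by
  have hmem : k ∈ Icc m n ↔ k + 1 ∈ Icc m n := by simp only [mem_Icc]; omega
  rw [sum_transfer]
  by_cases h : k + 1 ∈ Icc m n <;> simp [h, hmem]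

lemma sum_Icc_succ_transfer_succ (hkn : k + 1 ≤ n) :
    ∑ i ∈ Icc (k + 1) n, transfer p k (k + 1) ε i = ∑ i ∈ Icc (k + 1) n, p i + ε := by
  simp [sum_transfer, hkn]

lemma transfer_succ_apply_le_apply (hanti : ∀ i j, 1 ≤ i → i ≤ j → j ≤ n → p j ≤ p i)
    (hε : 0 ≤ ε) (hgap : 2 * ε ≤ p k - p (k + 1)) {i j : ℕ} (hi : 1 ≤ i) (hij : i ≤ j)
    (hjn : j ≤ n) : transfer p k (k + 1) ε j ≤ transfer p k (k + 1) ε i := by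
  have hne : k ≠ k + 1 := k.succ_ne_self.symm
  by_cases hik : i = k
  · subst hik
    rcases (show j = i ∨ j = i + 1 ∨ i + 2 ≤ j by omega) with rfl | rfl | hj
    · exact le_rfl
    · rw [transfer_apply_left p ε hne, transfer_apply_right p ε hne]
      linarith
    · rw [transfer_apply_left p ε hne, transfer_apply_of_ne p ε (by omega) (by omega)]
      linarith [hanti (i + 1) j (by omega) (by omega) hjn]
  by_cases hjk : j = k + 1
  · subst hjk
    rcases (show i = k + 1 ∨ i < k by omega) with rfl | hik'
    · exact le_rfl
    · rw [transfer_apply_right p ε hne]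
      linarith [hanti i k hi hik'.le (by omega), le_transfer_apply (p := p) (b := k + 1) hε hik]
  calc transfer p k (k + 1) ε j ≤ p j := transfer_apply_le hε hjk
    _ ≤ p i := hanti i j hi hij hjn
    _ ≤ transfer p k (k + 1) ε i := le_transfer_apply hε hik

lemma IsAUH.transfer_succ (hp : IsAUH n p) (hε : 0 ≤ ε) (hk : 1 ≤ k) (hkn : k + 1 ≤ n)
    (hgap : 2 * ε ≤ p k - p (k + 1)) (hA : ∑ i ∈ Icc (k + 2) n, p i + ε ≤ p k)
    (hB : 2 ≤ k → ∑ i ∈ Icc (k + 1) n, p i + ε ≤ p (k - 1)) :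
    IsAUH n (transfer p k (k + 1) ε) := by
  obtain ⟨hnonneg, hanti, hsum, htail⟩ := hp
  have hne : k ≠ k + 1 := k.succ_ne_self.symm
  refine ⟨fun i hi => ?_, fun i j => transfer_succ_apply_le_apply hanti hε hgap, ?_,
    fun i hi hin => ?_⟩
  · by_cases hik : i = k
    · have := hnonneg (k + 1) (mem_Icc.2 ⟨by omega, hkn⟩)
      rw [hik, transfer_apply_left p ε hne]
      linarith
    · exact (hnonneg i hi).trans (le_transfer_apply hε hik)
  · rw [sum_Icc_transfer_succ_of_ne (by omega) hkn]
    exact hsum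
  · rcases eq_or_ne (i + 2) (k + 1) with hik | hik
    · rw [hik, sum_Icc_succ_transfer_succ hkn, transfer_apply_of_ne p ε (by omega) (by omega),
        show i = k - 1 by omega]
      exact hB (by omega)
    rw [sum_Icc_transfer_succ_of_ne hik hkn]
    rcases eq_or_ne i k with rfl | hik'
    · rw [transfer_apply_left p ε hne]
      linarith
    · exact (htail i hi hin).trans (le_transfer_apply hε hik')

end AdjacentTransfer

lemma entropy_eq_sum_negMulLog_div (n : ℕ) (p : ℕ → ℝ) :
    entropy n p = (∑ i ∈ Icc 1 n, Real.negMulLog (p i)) / Real.log 2 := by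
  simp only [entropy, sum_div, ← sum_neg_distrib, Real.negMulLog, Real.logb]
  exact sum_congr rfl fun i _ => by ring

lemma entropy_lt_entropy_transfer {n : ℕ} {p : ℕ → ℝ} {a b : ℕ} {ε : ℝ} (hab : a ≠ b)
    (ha : a ∈ Icc 1 n) (hb : b ∈ Icc 1 n) (hpb : 0 ≤ p b) (hε : 0 < ε) (hεab : ε < p a - p b) :
    entropy n p < entropy n (transfer p a b ε) := by
  rw [entropy_eq_sum_negMulLog_div, entropy_eq_sum_negMulLog_div]
  refine div_lt_div_of_pos_right ?_ (Real.log_pos one_lt_two)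
  have hdiff := sum_sub_sum_eq_of_eq_off_pair (f := fun i => Real.negMulLog (transfer p a b ε i))
    (g := fun i => Real.negMulLog (p i)) hab ha hb
    fun i hia hib => by rw [transfer_apply_of_ne p ε hia hib]
  simp only [transfer_apply_left p ε hab, transfer_apply_right p ε hab] at hdiff
  have := Real.strictConcaveOn_negMulLog.add_lt_add_of_transfer (x := p a)
    (Set.mem_Ici.2 (by linarith)) (Set.mem_Ici.2 hpb) hε hεab
  linarith

lemma IsAUH.exists_entropy_lt_of_slack {n k : ℕ} {p : ℕ → ℝ} (hp : IsAUH n p) (hk : 1 ≤ k)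
    (hkn : k + 1 ≤ n) (hgap : p (k + 1) < p k) (hA : ∑ i ∈ Icc (k + 2) n, p i < p k)
    (hB : 2 ≤ k → ∑ i ∈ Icc (k + 1) n, p i < p (k - 1)) :
    ∃ q, IsAUH n q ∧ entropy n p < entropy n q := by
  have hgap' : ∀ᶠ ε in 𝓝 (0 : ℝ), ε < (p k - p (k + 1)) / 2 := eventually_lt_nhds (by linarith)
  have hA' : ∀ᶠ ε in 𝓝 (0 : ℝ), ε < p k - ∑ i ∈ Icc (k + 2) n, p i :=
    eventually_lt_nhds (sub_pos.2 hA)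
  have hB' : ∀ᶠ ε in 𝓝 (0 : ℝ), 2 ≤ k → ε < p (k - 1) - ∑ i ∈ Icc (k + 1) n, p i := by
    by_cases h2 : 2 ≤ k
    · filter_upwards [eventually_lt_nhds (sub_pos.2 (hB h2))] with ε hε _ using hε
    · exact .of_forall fun _ h => absurd h h2
  obtain ⟨ε, hε : 0 < ε, hgapε, hAε, hBε⟩ :=
    (eventually_mem_nhdsWithin.and (nhdsWithin_le_nhds (s := Set.Ioi 0)
      (hgap'.and (hA'.and hB')))).exists
  have hpk : 0 ≤ p (k + 1) := hp.1 (k + 1) (mem_Icc.2 ⟨by omega, hkn⟩)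
  exact ⟨_, hp.transfer_succ hε.le hk hkn (by linarith) (by linarith)
    (fun h => by linarith [hBε h]),
    entropy_lt_entropy_transfer k.succ_ne_self.symm (mem_Icc.2 ⟨hk, by omega⟩)
      (mem_Icc.2 ⟨by omega, hkn⟩) hpk hε (by linarith)⟩

/-- If an AUH distribution on `n ≥ 3` symbols maximizes the entropy, then
`p 1 = q 2 = ∑_{i ≥ 3} p i`. -/
theorem maxEntropy_first_eq (n : ℕ) (hn : 3 ≤ n) (p : ℕ → ℝ) (hp : IsAUH n p)
    (hmax : ∀ p' : ℕ → ℝ, IsAUH n p' → entropy n p' ≤ entropy n p) :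
    p 1 = ∑ i ∈ Finset.Icc 3 n, p i := by
  have ⟨hnonneg, hanti, _, htail⟩ := hp
  refine (htail 1 le_rfl (by omega)).antisymm' (le_of_not_gt fun hlt => ?_)
  obtain ⟨q, hq, hpq⟩ : ∃ q, IsAUH n q ∧ entropy n p < entropy n q := by
    rcases (hanti 1 2 le_rfl (by omega) (by omega)).lt_or_eq with h21 | h21
    · exact hp.exists_entropy_lt_of_slack le_rfl (by omega) h21 hlt (by omega)
    have hp3 : p 3 ≤ ∑ i ∈ Icc 3 n, p i :=
      single_le_sum (fun i hi => hnonneg i (by simp at hi ⊢; omega)) (by simp; omega)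
    have hp4 : ∑ i ∈ Icc 4 n, p i ≤ ∑ i ∈ Icc 3 n, p i :=
      sum_le_sum_of_subset_of_nonneg (Icc_subset_Icc (by omega) le_rfl)
        fun i hi _ => hnonneg i (by simp at hi ⊢; omega)
    exact hp.exists_entropy_lt_of_slack (k := 2) (by omega) (by omega) (by linarith) (by linarith)
      fun _ => hlt
  exact (hmax q hq).not_gt hpq
end
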